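/- Let (G, F_•G, 𝔯) be a filtered Rota-Baxter group, gr G = ⊕ₙ FₙG/Fₙ₊₁G its associated graded Lie ring with bracket [x̄, ȳ] = (x,y)‾ for x ∈ FₙG, y ∈ FₘG, and gr𝔯 the induced additive map with gr𝔯(x̄) = 𝔯(x)‾ on each graded piece. Then gr𝔯 is a Rota-Baxter operator of weight 1 on the Lie ring gr G: [gr𝔯(a), gr𝔯(b)] = gr𝔯([gr𝔯(a), b] + [a, gr𝔯(b)] + [a, b]) for all homogeneous a, b ∈ gr G. -/

import Mathlib

/-!
The Rota–Baxter identity gives the exact formula `(𝔯x, 𝔯y) = 𝔯((x·𝔯x, y·𝔯y)·(𝔯y, 𝔯x))` and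
`𝔯(u)⁻¹·𝔯(v) = 𝔯(𝔯(u)⁻¹·u⁻¹v·𝔯(u))`. Modulo `Fₙ₊ₘ₊₁G` the commutators of elements of `FₙG` and
`FₘG` are central, so the commutator is bilinear there and `(x·𝔯x, y·𝔯y)·(𝔯y, 𝔯x)` is congruent to
`(𝔯x, y)·(x, 𝔯y)·(x, y)`. Since `Fₙ₊ₘ₊₁G` is normal and preserved by `𝔯`, the values of `𝔯` at
these two elements agree modulo `Fₙ₊ₘ₊₁G`.
-/

def commG {G : Type*} [Group G] (a b : G) : G := a * b * a⁻¹ * b⁻¹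

open scoped commutatorElement

theorem commG_eq_commutatorElement {G : Type*} [Group G] (a b : G) : commG a b = ⁅a, b⁆ := rfl

open Subgroup

def IsRotaBaxter {G : Type*} [Group G] (R : G → G) : Prop :=
  ∀ g h : G, R g * R h = R (g * R g * h * (R g)⁻¹)

namespace IsRotaBaxter

variable {G : Type*} [Group G] {R : G → G}

theorem map_one (hR : IsRotaBaxter R) : R 1 = 1 := by
  have h := hR 1 1
  rw [one_mul, mul_one, mul_inv_cancel] at h
  exact mul_eq_left.mp h

theorem inv_eq (hR : IsRotaBaxter R) (g : G) : (R g)⁻¹ = R ((R g)⁻¹ * g⁻¹ * R g) := by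
  refine inv_eq_of_mul_eq_one_right ?_
  rw [hR, ← hR.map_one]
  congr 1
  group

theorem mul_inv_eq (hR : IsRotaBaxter R) (g h : G) :
    R g * (R h)⁻¹ = R (g * R g * (R h)⁻¹ * h⁻¹ * R h * (R g)⁻¹) := by
  conv_lhs => rw [hR.inv_eq h, hR]
  congr 1
  group

theorem inv_mul_eq (hR : IsRotaBaxter R) (g h : G) :
    (R g)⁻¹ * R h = R ((R g)⁻¹ * (g⁻¹ * h) * R g) := by
  rw [hR.inv_eq g, hR, ← hR.inv_eq]
  congr 1
  group

theorem commutatorElement_eq (hR : IsRotaBaxter R) (x y : G) :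
    ⁅R x, R y⁆ = R (⁅x * R x, y * R y⁆ * ⁅R y, R x⁆) := by
  rw [show ⁅R x, R y⁆ = R x * R y * (R y * R x)⁻¹ by group, hR x y, hR y x, hR.mul_inv_eq,
    ← hR x y, ← hR y x]
  congr 1
  group

end IsRotaBaxter

theorem commutatorElement_mul_mul_of_mem_center {H : Type*} [Group H] {x y a b : H}
    (hxy : ⁅x, y⁆ ∈ center H) (hxb : ⁅x, b⁆ ∈ center H) (hay : ⁅a, y⁆ ∈ center H)
    (hab : ⁅a, b⁆ ∈ center H) :
    ⁅x * a, y * b⁆ * ⁅b, a⁆ = ⁅a, y⁆ * ⁅x, b⁆ * ⁅x, y⁆ := by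
  have conj : ∀ {c : H}, c ∈ center H → ∀ g : H, g * c * g⁻¹ = c := fun hc g => by
    rw [mem_center_iff.mp hc g]; group
  have hayb : ⁅a, y * b⁆ = ⁅a, y⁆ * ⁅a, b⁆ := by
    rw [show ⁅a, y * b⁆ = ⁅a, y⁆ * (y * ⁅a, b⁆ * y⁻¹) by group, conj hab]
  have hxyb : ⁅x, y * b⁆ = ⁅x, y⁆ * ⁅x, b⁆ := by
    rw [show ⁅x, y * b⁆ = ⁅x, y⁆ * (y * ⁅x, b⁆ * y⁻¹) by group, conj hxb]
  rw [show ⁅x * a, y * b⁆ = x * ⁅a, y * b⁆ * x⁻¹ * ⁅x, y * b⁆ by group,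
    conj (hayb ▸ mul_mem hay hab), hayb, hxyb,
    show ⁅b, a⁆ = ⁅a, b⁆⁻¹ by group]
  rw [mul_assoc ⁅a, y⁆, ← mem_center_iff.mp hab, ← mem_center_iff.mp hxy ⁅x, b⁆]
  group

section Filtration

variable {G : Type*} [Group G] {F : ℕ → Subgroup G}

theorem commutatorElement_mem_add (hcomm : ∀ n m, 1 ≤ n → 1 ≤ m → ⁅F n, F m⁆ ≤ F (n + m))
    {n m : ℕ} (hn : 1 ≤ n) (hm : 1 ≤ m) {p q : G} (hp : p ∈ F n) (hq : q ∈ F m) :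
    ⁅p, q⁆ ∈ F (n + m) :=
  hcomm n m hn hm (commutator_mem_commutator hp hq)

theorem commutatorElement_mem_succ (hF1 : F 1 = ⊤)
    (hcomm : ∀ n m, 1 ≤ n → 1 ≤ m → ⁅F n, F m⁆ ≤ F (n + m)) {k : ℕ} (hk : 1 ≤ k) {w : G}
    (hw : w ∈ F k) (g : G) : ⁅w, g⁆ ∈ F (k + 1) :=
  commutatorElement_mem_add hcomm hk le_rfl hw (hF1 ▸ mem_top g)

theorem normal_of_one_le (hF1 : F 1 = ⊤) (hdesc : ∀ n, 1 ≤ n → F (n + 1) ≤ F n)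
    (hcomm : ∀ n m, 1 ≤ n → 1 ≤ m → ⁅F n, F m⁆ ≤ F (n + m)) {k : ℕ} (hk : 1 ≤ k) :
    (F k).Normal where
  conj_mem u hu g := by
    rw [show g * u * g⁻¹ = u * ⁅u⁻¹, g⁆ by group]
    exact mul_mem hu (hdesc k hk (commutatorElement_mem_succ hF1 hcomm hk (inv_mem hu) g))

theorem mk_commutatorElement_mul_mul_eq (hF1 : F 1 = ⊤)
    (hdesc : ∀ n, 1 ≤ n → F (n + 1) ≤ F n)
    (hcomm : ∀ n m, 1 ≤ n → 1 ≤ m → ⁅F n, F m⁆ ≤ F (n + m)) {n m : ℕ} (hn : 1 ≤ n) (hm : 1 ≤ m)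
    {x a y b : G} (hx : x ∈ F n) (ha : a ∈ F n) (hy : y ∈ F m) (hb : b ∈ F m) :
    ((⁅x * a, y * b⁆ * ⁅b, a⁆ : G) : G ⧸ F (n + m + 1)) = (⁅a, y⁆ * ⁅x, b⁆ * ⁅x, y⁆ : G) := by
  have : (F (n + m + 1)).Normal := normal_of_one_le hF1 hdesc hcomm (by omega)
  have mk_commutatorElement : ∀ p q : G,
      ((⁅p, q⁆ : G) : G ⧸ F (n + m + 1)) = ⁅(p : G ⧸ F (n + m + 1)), (q : G ⧸ F (n + m + 1))⁆ :=
    map_commutatorElement (QuotientGroup.mk' _)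
  have central : ∀ {p q : G}, p ∈ F n → q ∈ F m →
      ⁅(p : G ⧸ F (n + m + 1)), (q : G ⧸ F (n + m + 1))⁆ ∈ center (G ⧸ F (n + m + 1)) := by
    intro p q hp hq
    have h := commutatorElement_mem_succ hF1 hcomm (by omega)
      (commutatorElement_mem_add hcomm hn hm hp hq)
    rw [← Subgroup.mem_upperCentralSeriesStep,
      Subgroup.upperCentralSeriesStep_eq_comap_center] at h
    rw [← mk_commutatorElement]
    exact h
  simp only [QuotientGroup.mk_mul, mk_commutatorElement]
  exact commutatorElement_mul_mul_of_mem_center (central hx hy) (central hx hb) (central ha hy)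
    (central ha hb)

end Filtration

/-- for a filtered Rota-Baxter group `(G, F_•G, 𝔯)`, the induced map
`gr𝔯` on the associated graded Lie ring `gr G` is a Rota-Baxter operator of weight 1:
for `x ∈ FₙG`, `y ∈ FₘG`, in `grₙ₊ₘG = Fₙ₊ₘG/Fₙ₊ₘ₊₁G` one has
`[gr𝔯 x̄, gr𝔯 ȳ] = gr𝔯([gr𝔯 x̄, ȳ] + [x̄, gr𝔯 ȳ] + [x̄, ȳ])`; at the level of group
elements, `(𝔯x, 𝔯y) ≡ 𝔯((𝔯x,y)·(x,𝔯y)·(x,y))` modulo `Fₙ₊ₘ₊₁G`. -/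
theorem stmt17 {G : Type*} [Group G] (F : ℕ → Subgroup G) (R : G → G)
    (hF1 : F 1 = ⊤)
    (hdesc : ∀ n, 1 ≤ n → F (n + 1) ≤ F n)
    (hcomm : ∀ n m, 1 ≤ n → 1 ≤ m → ⁅F n, F m⁆ ≤ F (n + m))
    (hRB : ∀ g h : G, R g * R h = R (g * R g * h * (R g)⁻¹))
    (hRF : ∀ n, 1 ≤ n → ∀ x ∈ F n, R x ∈ F n) :
    ∀ n m, 1 ≤ n → 1 ≤ m → ∀ x ∈ F n, ∀ y ∈ F m,
      (commG (R x) (R y))⁻¹ * R (commG (R x) y * commG x (R y) * commG x y) ∈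
        F (n + m + 1) := by
  intro n m hn hm x hx y hy
  have hR : IsRotaBaxter R := hRB
  have hTS := QuotientGroup.eq.mp <|
    mk_commutatorElement_mul_mul_eq hF1 hdesc hcomm hn hm hx (hRF n hn x hx) hy (hRF m hm y hy)
  have hnormal := normal_of_one_le hF1 hdesc hcomm (k := n + m + 1) (by omega)
  simp only [commG_eq_commutatorElement]
  rw [hR.commutatorElement_eq, hR.inv_mul_eq]
  exact hRF _ (by omega) _ (hnormal.conj_mem' _ hTS _)
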